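/- arXiv:2112.02311 — 5 statements merged into one kernel-verified Lean document; each statement's English description precedes it below -/
import Mathlib

section
/- Fix a real ν and define B(ν, a) = ∫_{0}^{∞} x^{ν−1} e^{−x − a/x} dx for a > 0. Then for every a₀ > 0, the function a ↦ B(ν, a) has derivative −B(ν−1, a₀) at a₀; that is, HasDerivAt (fun a => ∫_{0}^{∞} x^{ν−1} e^{−x − a/x} dx) (−∫_{0}^{∞} x^{ν−2} e^{−x − a₀/x} dx) a₀. -/
/-!
Differentiating `x ^ s * exp (-x - a / x)` in `a` gives `-x ^ (s - 1) * exp (-x - a / x)`.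
For `a` near `a₀` this derivative is dominated by the integrand at parameter `a₀ / 2`, and all
these integrands are integrable on `(0, ∞)` because `exp (-a / x) ≤ n! (x / a) ^ n` turns the
singularity at `0` into an (integrable) Gamma-integrand for `n ≥ -s`.
-/

open MeasureTheory Real Set Filter
open scoped Nat

lemma Real.exp_neg_le_factorial_div_pow {y : ℝ} (hy : 0 < y) (n : ℕ) :
    exp (-y) ≤ n ! / y ^ n := by
  rw [exp_neg, inv_eq_one_div, div_le_div_iff₀ (exp_pos y) (pow_pos hy n), one_mul,
    ← div_le_iff₀' (by positivity)]
  exact pow_div_factorial_le_exp y hy.le n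

noncomputable section

namespace BesselIntegral

def integrand (s a x : ℝ) : ℝ := x ^ s * exp (-x - a / x)

lemma integrand_nonneg (s a : ℝ) {x : ℝ} (hx : 0 ≤ x) : 0 ≤ integrand s a x := by
  unfold integrand; positivity

lemma integrand_antitone (s : ℝ) {x : ℝ} (hx : 0 ≤ x) : Antitone (integrand s · x) := by
  intro a b hab
  simp only [integrand]
  gcongr

lemma continuousOn_integrand (s a : ℝ) : ContinuousOn (integrand s a) (Ioi 0) := by
  intro x hx
  have hx : x ≠ 0 := (mem_Ioi.1 hx).ne'
  have hexp : ContinuousAt (fun x => exp (-x - a / x)) x := by fun_prop (disch := assumption)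
  exact ((continuousAt_rpow_const x s (.inl hx)).mul hexp).continuousWithinAt

lemma integrableOn_integrand (s : ℝ) {a : ℝ} (ha : 0 < a) :
    IntegrableOn (integrand s a) (Ioi 0) := by
  obtain ⟨n, hn⟩ := exists_nat_ge (-s)
  have hGamma := (GammaIntegral_convergent (s := s + n + 1) (by linarith)).const_mul (n ! / a ^ n)
  simp only [add_sub_cancel_right] at hGamma
  refine hGamma.mono' ((continuousOn_integrand s a).aestronglyMeasurable measurableSet_Ioi) ?_
  filter_upwards [ae_restrict_mem measurableSet_Ioi] with x (hx : 0 < x)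
  rw [norm_of_nonneg (integrand_nonneg s a hx.le)]
  calc integrand s a x = x ^ s * exp (-x) * exp (-(a / x)) := by
        rw [integrand, mul_assoc, ← exp_add, sub_eq_add_neg]
    _ ≤ x ^ s * exp (-x) * (n ! / (a / x) ^ n) := by
        gcongr; exact exp_neg_le_factorial_div_pow (div_pos ha hx) n
    _ = n ! / a ^ n * (exp (-x) * x ^ (s + n)) := by
        rw [rpow_add hx, rpow_natCast, div_pow]; field_simp

lemma hasDerivAt_integrand (s a : ℝ) {x : ℝ} (hx : 0 < x) :
    HasDerivAt (integrand s · x) (-integrand (s - 1) a x) a := by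
  have hexp := (((hasDerivAt_id a).div_const x).const_sub (-x)).exp.const_mul (x ^ s)
  refine hexp.congr_deriv ?_
  simp only [integrand, id, rpow_sub_one hx.ne']
  field_simp

theorem hasDerivAt_integral_integrand (s : ℝ) {a₀ : ℝ} (ha : 0 < a₀) :
    HasDerivAt (fun a => ∫ x in Ioi 0, integrand s a x)
      (-∫ x in Ioi 0, integrand (s - 1) a₀ x) a₀ := by
  have hmeas (s a : ℝ) : AEStronglyMeasurable (integrand s a) (volume.restrict (Ioi 0)) :=
    (continuousOn_integrand s a).aestronglyMeasurable measurableSet_Ioi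
  have hbound : ∀ᵐ x ∂volume.restrict (Ioi 0), ∀ a ∈ Ioi (a₀ / 2),
      ‖-integrand (s - 1) a x‖ ≤ integrand (s - 1) (a₀ / 2) x := by
    filter_upwards [ae_restrict_mem measurableSet_Ioi] with x (hx : 0 < x) a (hav : a₀ / 2 < a)
    rw [norm_neg, norm_of_nonneg (integrand_nonneg _ _ hx.le)]
    exact integrand_antitone _ hx.le hav.le
  have hderiv : ∀ᵐ x ∂volume.restrict (Ioi 0), ∀ a ∈ Ioi (a₀ / 2),
      HasDerivAt (integrand s · x) (-integrand (s - 1) a x) a := by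
    filter_upwards [ae_restrict_mem measurableSet_Ioi] with x (hx : 0 < x) a _
    exact hasDerivAt_integrand s a hx
  have key := hasDerivAt_integral_of_dominated_loc_of_deriv_le (Ioi_mem_nhds (half_lt_self ha))
    (.of_forall (hmeas s)) (integrableOn_integrand s ha) (hmeas (s - 1) a₀).neg hbound
    (integrableOn_integrand (s - 1) (half_pos ha)) hderiv
  simpa only [integral_neg] using key.2

end BesselIntegral

end

/-- Differentiation under the integral sign for the Bessel-type integral
`B(ν, a) = ∫₀^∞ x^(ν-1) e^(-x - a/x) dx`: for every `a₀ > 0`, the map `a ↦ B(ν, a)` has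
derivative `-B(ν-1, a₀)` at `a₀`. -/
theorem bessel_type_integral_hasDerivAt (ν a₀ : ℝ) (ha : 0 < a₀) :
    HasDerivAt (fun a : ℝ => ∫ x in Set.Ioi (0 : ℝ), x ^ (ν - 1) * Real.exp (-x - a / x))
      (-∫ x in Set.Ioi (0 : ℝ), x ^ (ν - 2) * Real.exp (-x - a₀ / x)) a₀ := by
  have h := BesselIntegral.hasDerivAt_integral_integrand (ν - 1) ha
  rwa [show ν - 1 - 1 = ν - 2 by ring] at h
end

section
/- Let q be a positive integer and let φ, ψ : Fin q → ℝ → ℝ be measurable functions such that for all i, j the product x ↦ φ_i(x)·ψ_j(x) is integrable on (0, ∞). Then ∫_{0 < x_1 < x_2 < ⋯ < x_q} det[φ_i(x_j)]_{i,j} · det[ψ_i(x_j)]_{i,j} dx_1 ⋯ dx_q = det[ ∫_{0}^{∞} φ_i(x) ψ_j(x) dx ]_{i,j}, where the left-hand side is the Lebesgue integral over the ordered region {x ∈ (Fin q → ℝ) : 0 < x_1 < ⋯ < x_q} of the product of the two q×q determinants with (i,j) entries φ_i(x_j) and ψ_i(x_j), and the right-hand side is the determinant of the q×q matrix of pairwise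 integrals. -/
/-!
Expanding both determinants by Leibniz's formula and integrating term by term (Fubini) gives
Andréief's identity on the whole orthant: `∫_{(0,∞)^q} det Φ(x) det Ψ(x) dx = q! det M`,
since `∑_{σ,τ} sign σ sign τ ∏_j M_{σ j, τ j} = q! det M`. The integrand is invariant under
permutations of the coordinates, because both determinants pick up the same sign. Up to the null
set where two coordinates coincide, the orthant is the disjoint union of the `q!` preimages of the
ordered region under coordinate permutations, so the orthant integral is `q!` times the ordered
one.
-/

open MeasureTheory Equiv Function

namespace Matrix

variable {ι R : Type*} [Fintype ι] [DecidableEq ι] [CommRing R]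

theorem det_mul_det_eq_sum_sum (A B : Matrix ι ι R) :
    A.det * B.det = ∑ σ : Perm ι, ∑ τ : Perm ι,
      ((Perm.sign σ : ℤ) : R) * (Perm.sign τ : ℤ) * ∏ j, A (σ j) j * B (τ j) j := by
  simp only [det_apply', Finset.sum_mul_sum, Finset.prod_mul_distrib]
  exact Finset.sum_congr rfl fun σ _ => Finset.sum_congr rfl fun τ _ => by ring

theorem sum_sign_mul_prod_apply_perm (M : Matrix ι ι R) (σ : Perm ι) :
    ∑ τ : Perm ι, ((Perm.sign τ : ℤ) : R) * ∏ j, M (σ j) (τ j) = Perm.sign σ * M.det := by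
  rw [← det_permute, ← det_transpose, det_apply']
  rfl

theorem sum_sum_sign_mul_prod_apply_perm (M : Matrix ι ι R) :
    ∑ σ : Perm ι, ∑ τ : Perm ι,
      ((Perm.sign σ : ℤ) : R) * (Perm.sign τ : ℤ) * ∏ j, M (σ j) (τ j)
      = (Fintype.card ι).factorial * M.det := by
  have hsign (σ : Perm ι) : ((Perm.sign σ : ℤ) : R) * (Perm.sign σ : ℤ) = 1 := by
    rw [← Int.cast_mul, ← Units.val_mul, Int.units_mul_self, Units.val_one, Int.cast_one]
  calc _ = ∑ σ : Perm ι, ((Perm.sign σ : ℤ) : R) * (Perm.sign σ * M.det) := by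
        simp only [mul_assoc, ← Finset.mul_sum, sum_sign_mul_prod_apply_perm]
    _ = _ := by
        simp only [← mul_assoc, hsign, one_mul, Finset.sum_const, Finset.card_univ,
          Fintype.card_perm, nsmul_eq_mul]

theorem det_submatrix_perm_mul_det_submatrix_perm (A B : Matrix ι ι R) (π : Perm ι) :
    (A.submatrix id π).det * (B.submatrix id π).det = A.det * B.det := by
  rw [det_permute', det_permute', mul_mul_mul_comm, ← Int.cast_mul, ← Units.val_mul,
    Int.units_mul_self, Units.val_one, Int.cast_one, one_mul]

end Matrix

theorem Equiv.Perm.eq_of_strictMono_comp {ι α : Type*} [LinearOrder ι] [Finite ι]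
    [LinearOrder α] {x : ι → α} {σ τ : Perm ι} (hσ : StrictMono (x ∘ σ))
    (hτ : StrictMono (x ∘ τ)) : σ = τ := by
  have key (c : ι) : (x ∘ σ) ((σ⁻¹ * τ) c) = x (τ c) := by simp
  have h : StrictMono (σ⁻¹ * τ) := fun a b hab =>
    hσ.lt_iff_lt.1 (by rw [key, key]; exact hτ hab)
  exact inv_mul_eq_one.1 (Perm.ext fun a => h.apply_eq)

namespace MeasureTheory

section Andreief

open Matrix

variable {α ι : Type*} [MeasurableSpace α] [Fintype ι] [DecidableEq ι]
  {μ : Measure α} [SigmaFinite μ] {φ ψ : ι → α → ℝ}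

theorem integrable_pi_det_mul_det
    (hint : ∀ i j, Integrable (fun x => φ i x * ψ j x) μ) :
    Integrable (fun x : ι → α =>
      (Matrix.of fun i j => φ i (x j)).det * (Matrix.of fun i j => ψ i (x j)).det)
      (Measure.pi fun _ => μ) := by
  simp only [det_mul_det_eq_sum_sum, of_apply]
  exact integrable_finsetSum _ fun σ _ => integrable_finsetSum _ fun τ _ =>
    (Integrable.fintype_prod fun j => hint (σ j) (τ j)).const_mul _

/-- **Andréief's identity**. -/
theorem integral_pi_det_mul_det
    (hint : ∀ i j, Integrable (fun x => φ i x * ψ j x) μ) :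
    ∫ x : ι → α, (Matrix.of fun i j => φ i (x j)).det * (Matrix.of fun i j => ψ i (x j)).det
        ∂(Measure.pi fun _ => μ)
      = (Fintype.card ι).factorial * (Matrix.of fun i j => ∫ x, φ i x * ψ j x ∂μ).det := by
  have hprod (σ τ : Perm ι) :=
    Integrable.fintype_prod (μ := fun _ => μ) fun j => hint (σ j) (τ j)
  simp only [det_mul_det_eq_sum_sum, of_apply]
  rw [integral_finsetSum _ fun σ _ => integrable_finsetSum _ fun τ _ =>
    (hprod σ τ).const_mul _]
  simp only [integral_finsetSum _ fun τ _ => (hprod _ τ).const_mul _, integral_const_mul]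
  refine (Finset.sum_congr rfl fun σ _ => Finset.sum_congr rfl fun τ _ => ?_).trans
    (sum_sum_sign_mul_prod_apply_perm (of fun i j => ∫ x, φ i x * ψ j x ∂μ))
  rw [integral_fintype_prod_eq_prod (fun j t => φ (σ j) t * ψ (τ j) t)]
  rfl

end Andreief

theorem volume_setOf_apply_eq_apply {ι : Type*} [Fintype ι] {i j : ι} (hij : i ≠ j) :
    volume {x : ι → ℝ | x i = x j} = 0 := by
  classical
  let L : (ι → ℝ) →ₗ[ℝ] ℝ := LinearMap.proj (R := ℝ) (φ := fun _ => ℝ) i - LinearMap.proj j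
  have hL : L ≠ 0 := fun h => by
    simpa [L, Pi.single_eq_of_ne hij.symm] using LinearMap.congr_fun h (Pi.single i 1)
  have hker : {x : ι → ℝ | x i = x j} = LinearMap.ker L := by
    ext x; simp [L, sub_eq_zero]
  rw [hker]
  exact Measure.addHaar_submodule _ _ fun h => hL (LinearMap.ker_eq_top.1 h)

theorem ae_injective_real_pi {ι : Type*} [Fintype ι] : ∀ᵐ x : ι → ℝ, Injective x := by
  have hnull : volume (⋃ i, ⋃ j, ⋃ (_ : i ≠ j), {x : ι → ℝ | x i = x j}) = 0 :=
    measure_iUnion_null fun i => measure_iUnion_null fun j => measure_iUnion_null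
      fun hij => volume_setOf_apply_eq_apply hij
  refine measure_mono_null (fun x hx => ?_) hnull
  change ¬ Injective x at hx
  simp only [Injective, not_forall] at hx
  obtain ⟨i, j, hxij, hij⟩ := hx
  exact Set.mem_iUnion₂.2 ⟨i, j, Set.mem_iUnion.2 ⟨hij, hxij⟩⟩

theorem measurableSet_setOf_strictMono {ι α : Type*} [Preorder ι] [Countable ι]
    [LinearOrder α] [TopologicalSpace α] [OrderClosedTopology α] [SecondCountableTopology α]
    [MeasurableSpace α] [OpensMeasurableSpace α] :
    MeasurableSet {x : ι → α | StrictMono x} := by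
  have h : {x : ι → α | StrictMono x} = ⋂ a, ⋂ b, ⋂ (_ : a < b), {x | x a < x b} := by
    ext x; simp [StrictMono]
  rw [h]
  exact .iInter fun a => .iInter fun b => .iInter fun _ =>
    measurableSet_lt (measurable_pi_apply a) (measurable_pi_apply b)

theorem setIntegral_univ_pi_eq_factorial_mul_setIntegral_strictMono {n : ℕ} {s : Set ℝ}
    (hs : MeasurableSet s) {F : (Fin n → ℝ) → ℝ}
    (hF : IntegrableOn F (Set.univ.pi fun _ => s))
    (hsymm : ∀ (σ : Perm (Fin n)) x, F (x ∘ σ) = F x) :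
    ∫ x in Set.univ.pi (fun _ => s), F x
      = n.factorial * ∫ x in {x : Fin n → ℝ | (∀ i, x i ∈ s) ∧ StrictMono x}, F x := by
  set S := {x : Fin n → ℝ | (∀ i, x i ∈ s) ∧ StrictMono x}
  let e (σ : Perm (Fin n)) : (Fin n → ℝ) ≃ᵐ (Fin n → ℝ) :=
    MeasurableEquiv.arrowCongr' σ.symm (.refl ℝ)
  have he (σ : Perm (Fin n)) (x : Fin n → ℝ) : e σ x = x ∘ σ := rfl
  have hmp (σ : Perm (Fin n)) : MeasurePreserving (e σ) :=
    volume_preserving_arrowCongr' _ _ (.id volume)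
  have hS : MeasurableSet S := by
    refine MeasurableSet.inter (s₁ := {x : Fin n → ℝ | ∀ i, x i ∈ s}) ?_
      measurableSet_setOf_strictMono
    rw [Set.ofPred_forall]
    exact .iInter fun i => hs.preimage (measurable_pi_apply i)
  have hpieces_sub : (⋃ σ, e σ ⁻¹' S) ⊆ Set.univ.pi fun _ => s :=
    Set.iUnion_subset fun σ x hx i _ => by simpa [he] using hx.1 (σ.symm i)
  have hcover : (⋃ σ, e σ ⁻¹' S) =ᵐ[volume] Set.univ.pi fun _ => s := by
    refine Filter.eventuallyEq_set.2 ?_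
    filter_upwards [ae_injective_real_pi] with x hx
    refine ⟨fun h => hpieces_sub h, fun h => Set.mem_iUnion.2 ⟨Tuple.sort x, ?_, ?_⟩⟩
    · exact fun i => h _ trivial
    · exact (Tuple.monotone_sort x).strictMono_of_injective (hx.comp (Tuple.sort x).injective)
  have hdisj : Pairwise (Disjoint on fun σ => e σ ⁻¹' S) := fun σ τ hne =>
    Set.disjoint_left.2 fun x hσ hτ => hne (Perm.eq_of_strictMono_comp hσ.2 hτ.2)
  have hpiece (σ : Perm (Fin n)) : ∫ x in e σ ⁻¹' S, F x = ∫ x in S, F x := by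
    simpa only [he, hsymm] using (hmp σ).setIntegral_preimage_emb (e σ).measurableEmbedding F S
  calc ∫ x in Set.univ.pi (fun _ => s), F x
      = ∫ x in ⋃ σ, e σ ⁻¹' S, F x := setIntegral_congr_set hcover.symm
    _ = ∑ σ, ∫ x in e σ ⁻¹' S, F x :=
        integral_iUnion_fintype (fun σ => hS.preimage (e σ).measurable) hdisj
          fun σ => hF.mono_set ((Set.subset_iUnion _ σ).trans hpieces_sub)
    _ = n.factorial * ∫ x in S, F x := by
        simp only [hpiece, Finset.sum_const, Finset.card_univ, Fintype.card_perm,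
          Fintype.card_fin, nsmul_eq_mul]

end MeasureTheory

theorem andreief_ordered_general (q : ℕ) (φ ψ : Fin q → ℝ → ℝ)
    (hint : ∀ i j, IntegrableOn (fun x : ℝ => φ i x * ψ j x) (Set.Ioi 0)) :
    ∫ x in {x : Fin q → ℝ | (∀ i, 0 < x i) ∧ StrictMono x},
        Matrix.det (Matrix.of fun i j => φ i (x j)) *
          Matrix.det (Matrix.of fun i j => ψ i (x j))
      = Matrix.det (Matrix.of fun i j => ∫ x in Set.Ioi (0 : ℝ), φ i x * ψ j x) := by
  have hpi : volume.restrict (Set.univ.pi fun _ : Fin q => Set.Ioi (0 : ℝ))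
      = Measure.pi fun _ => volume.restrict (Set.Ioi 0) := by
    rw [volume_pi, Measure.restrict_pi_pi]
  have hF : IntegrableOn (fun x : Fin q → ℝ => (Matrix.of fun i j => φ i (x j)).det *
      (Matrix.of fun i j => ψ i (x j)).det) (Set.univ.pi fun _ => Set.Ioi 0) := by
    rw [IntegrableOn, hpi]
    exact integrable_pi_det_mul_det hint
  have hfull := setIntegral_univ_pi_eq_factorial_mul_setIntegral_strictMono measurableSet_Ioi hF
    fun σ x => Matrix.det_submatrix_perm_mul_det_submatrix_perm (.of fun i j => φ i (x j))
      (.of fun i j => ψ i (x j)) σ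
  rw [hpi, integral_pi_det_mul_det hint, Fintype.card_fin] at hfull
  exact mul_left_cancel₀ (Nat.cast_ne_zero.2 q.factorial_ne_zero) hfull.symm

/-- Andréief determinant integral identity over the ordered region
`0 < x₁ < x₂ < ⋯ < x_q`: the integral of the product of the two determinants
`det[φ_i(x_j)]` and `det[ψ_i(x_j)]` equals the determinant of the matrix of
pairwise integrals `∫₀^∞ φ_i ψ_j`. -/
theorem andreief_ordered (q : ℕ) (hq : 0 < q) (φ ψ : Fin q → ℝ → ℝ)
    (hφ : ∀ i, Measurable (φ i)) (hψ : ∀ i, Measurable (ψ i))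
    (hint : ∀ i j, IntegrableOn (fun x : ℝ => φ i x * ψ j x) (Set.Ioi 0)) :
    ∫ x in {x : Fin q → ℝ | (∀ i, 0 < x i) ∧ StrictMono x},
        Matrix.det (Matrix.of fun i j => φ i (x j)) *
          Matrix.det (Matrix.of fun i j => ψ i (x j))
      = Matrix.det (Matrix.of fun i j => ∫ x in Set.Ioi (0 : ℝ), φ i x * ψ j x) :=
  andreief_ordered_general q φ ψ hint
end

section
/- Let q be a positive integer and let φ, ψ : Fin q → ℝ → ℝ be measurable functions such that for all i, j the product x ↦ φ_i(x)·ψ_j(x) is integrable on (0, ∞). Then ∫_{(0,∞)^q} det[φ_i(x_j)]_{i,j} · det[ψ_i(x_j)]_{i,j} dx_1 ⋯ dx_q = q! · det[ ∫_{0}^{∞} φ_i(x) ψ_j(x) dx ]_{i,j}. -/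
/-!
Expanding both determinants as sums over permutations turns the integrand into a signed sum of
products `∏ⱼ φ_{σ j}(x_j) ψ_{τ j}(x_j)`, each of which integrates by Fubini to
`∏ⱼ A_{σ j, τ j}` with `A_{ik} = ∫ φ_i ψ_k`. For fixed `τ`, the sum over `σ` is the determinant
of `A` with columns permuted by `τ`, i.e. `sign τ • det A`; the two signs cancel and the `q!`
choices of `τ` contribute equally.
-/

open MeasureTheory Matrix Equiv

namespace Matrix

variable {ι R : Type*} [Fintype ι] [DecidableEq ι] [CommRing R]

theorem det_of_mul_det_of_eq_sum_perm_sum_perm {α : Type*} (f g : ι → α → R) (x : ι → α) :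
    (of fun i j => f i (x j)).det * (of fun i j => g i (x j)).det =
      ∑ σ : Perm ι, ∑ τ : Perm ι,
        (Perm.sign σ * Perm.sign τ : R) * ∏ j, (f (σ j) (x j) * g (τ j) (x j)) := by
  simp only [det_apply', of_apply, Finset.sum_mul_sum, Finset.prod_mul_distrib]
  refine Finset.sum_congr rfl fun σ _ => Finset.sum_congr rfl fun τ _ => ?_
  ring

theorem sum_perm_sign_mul_prod_apply_perm (A : Matrix ι ι R) (τ : Perm ι) :
    ∑ σ : Perm ι, (Perm.sign σ : R) * ∏ j, A (σ j) (τ j) = Perm.sign τ * A.det := by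
  simpa [det_apply'] using det_permute' τ A

theorem sum_perm_sum_perm_sign_mul_prod (A : Matrix ι ι R) :
    ∑ σ : Perm ι, ∑ τ : Perm ι, (Perm.sign σ * Perm.sign τ : R) * ∏ j, A (σ j) (τ j) =
      (Fintype.card ι).factorial * A.det := by
  have sign_sq (τ : Perm ι) : (Perm.sign τ * Perm.sign τ : R) = 1 := by
    rw [← Int.cast_mul, ← Units.val_mul, Int.units_mul_self, Units.val_one, Int.cast_one]
  calc ∑ σ : Perm ι, ∑ τ : Perm ι, (Perm.sign σ * Perm.sign τ : R) * ∏ j, A (σ j) (τ j)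
      = ∑ τ : Perm ι, (Perm.sign τ : R) * ∑ σ : Perm ι, (Perm.sign σ : R) * ∏ j, A (σ j) (τ j) := by
        rw [Finset.sum_comm]
        simp only [Finset.mul_sum, mul_left_comm, mul_assoc]
    _ = ∑ _τ : Perm ι, A.det := by
        simp only [sum_perm_sign_mul_prod_apply_perm, ← mul_assoc, sign_sq, one_mul]
    _ = (Fintype.card ι).factorial * A.det := by
        rw [Finset.sum_const, Finset.card_univ, Fintype.card_perm, nsmul_eq_mul]

end Matrix

section Andreief

variable {ι α 𝕜 : Type*} [Fintype ι] [DecidableEq ι] [MeasurableSpace α] [RCLike 𝕜]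

theorem integral_det_mul_det_eq_factorial_mul_det (μ : Measure α) [SigmaFinite μ]
    (φ ψ : ι → α → 𝕜) (hint : ∀ i j, Integrable (fun x => φ i x * ψ j x) μ) :
    ∫ x, (of fun i j => φ i (x j)).det * (of fun i j => ψ i (x j)).det ∂(Measure.pi fun _ => μ) =
      ((Fintype.card ι).factorial : 𝕜) * (of fun i j => ∫ x, φ i x * ψ j x ∂μ).det := by
  have hprod : ∀ σ τ : Perm ι,
      Integrable (fun x : ι → α => ∏ j, (φ (σ j) (x j) * ψ (τ j) (x j))) (Measure.pi fun _ => μ) :=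
    fun σ τ => Integrable.fintype_prod fun j => hint (σ j) (τ j)
  simp_rw [det_of_mul_det_of_eq_sum_perm_sum_perm]
  rw [integral_finsetSum _ fun σ _ => integrable_finsetSum _ fun τ _ => (hprod σ τ).const_mul _]
  refine (Finset.sum_congr rfl fun σ _ => ?_).trans (sum_perm_sum_perm_sign_mul_prod _)
  rw [integral_finsetSum _ fun τ _ => (hprod σ τ).const_mul _]
  refine Finset.sum_congr rfl fun τ _ => ?_
  rw [integral_const_mul, integral_fintype_prod_eq_prod fun j x => φ (σ j) x * ψ (τ j) x]
  rfl

end Andreief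

theorem andreief_full_general (q : ℕ) (φ ψ : Fin q → ℝ → ℝ)
    (hint : ∀ i j, IntegrableOn (fun x : ℝ => φ i x * ψ j x) (Set.Ioi 0)) :
    ∫ x in Set.univ.pi (fun _ : Fin q => Set.Ioi (0 : ℝ)),
        Matrix.det (Matrix.of fun i j => φ i (x j)) *
          Matrix.det (Matrix.of fun i j => ψ i (x j))
      = (q.factorial : ℝ) *
          Matrix.det (Matrix.of fun i j => ∫ x in Set.Ioi (0 : ℝ), φ i x * ψ j x) := by
  rw [volume_pi, Measure.restrict_pi_pi,
    integral_det_mul_det_eq_factorial_mul_det _ φ ψ hint, Fintype.card_fin]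

/-- Andréief determinant integral identity over the full orthant `(0,∞)^q`:
the integral of the product of the two determinants `det[φ_i(x_j)]` and `det[ψ_i(x_j)]`
equals `q!` times the determinant of the matrix of pairwise integrals `∫₀^∞ φ_i ψ_j`. -/
theorem andreief_full (q : ℕ) (hq : 0 < q) (φ ψ : Fin q → ℝ → ℝ)
    (hφ : ∀ i, Measurable (φ i)) (hψ : ∀ i, Measurable (ψ i))
    (hint : ∀ i j, IntegrableOn (fun x : ℝ => φ i x * ψ j x) (Set.Ioi 0)) :
    ∫ x in Set.univ.pi (fun _ : Fin q => Set.Ioi (0 : ℝ)),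
        Matrix.det (Matrix.of fun i j => φ i (x j)) *
          Matrix.det (Matrix.of fun i j => ψ i (x j))
      = (q.factorial : ℝ) *
          Matrix.det (Matrix.of fun i j => ∫ x in Set.Ioi (0 : ℝ), φ i x * ψ j x) :=
  andreief_full_general q φ ψ hint
end

section
/- Let q be a positive integer and let γ : Fin q → ℝ be pairwise distinct reals, and fix an index n. For t ∈ ℝ let γ^{(t)} denote the tuple γ with its n-th entry replaced by t, and define g(t) = ∏_{i<j} (γ^{(t)}_j − γ^{(t)}_i). Then g has derivative at t = γ_n equal to (∏_{i<j} (γ_j − γ_i)) · ∑_{i ≠ n} (γ_n − γ_i)^{−1}; that is, HasDerivAt g ((∏_{i<j}(γ_j − γ_i)) · ∑_{i≠n} 1/(γ_n − γ_i)) γ_n. -/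
open Finset

/-!
The Vandermonde product is a product of the linear factors `γ j - γ i`, and the logarithmic
derivative of a product is the sum of the logarithmic derivatives of its factors. Moving the node
`γ n` gives the factor of the pair `i < j` the logarithmic derivative
`(δ_{j n} - δ_{i n}) / (γ j - γ i)`, so only the pairs containing `n` contribute, and by
antisymmetry each of them contributes `(γ n - γ i)⁻¹` for its other node `i`.
-/

theorem HasDerivAt.finsetProd_of_logDeriv {𝕜 ι 𝔸 : Type*} [NontriviallyNormedField 𝕜]
    [NormedCommRing 𝔸] [NormedAlgebra 𝕜 𝔸] {s : Finset ι} {f : ι → 𝕜 → 𝔸} {L : ι → 𝔸} {x : 𝕜}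
    (hf : ∀ i ∈ s, HasDerivAt (f i) (f i x * L i) x) :
    HasDerivAt (∏ i ∈ s, f i ·) ((∏ i ∈ s, f i x) * ∑ i ∈ s, L i) x := by
  classical
  convert HasDerivAt.fun_finsetProd hf using 1
  rw [mul_sum]
  refine sum_congr rfl fun i hi => ?_
  rw [smul_eq_mul, ← mul_assoc, prod_erase_mul _ _ hi]

theorem Finset.sum_univ_erase_eq_sum_Iio_add_sum_Ioi {ι M : Type*} [Fintype ι] [LinearOrder ι]
    [LocallyFiniteOrderBot ι] [LocallyFiniteOrderTop ι] [AddCommMonoid M] (f : ι → M) (n : ι) :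
    ∑ i ∈ univ.erase n, f i = ∑ i ∈ Iio n, f i + ∑ i ∈ Ioi n, f i := by
  rw [← sum_union (disjoint_left.2 fun i hlt hgt => (mem_Iio.1 hlt).asymm (mem_Ioi.1 hgt))]
  congr 1
  ext i
  simp

theorem Finset.sum_Ioi_single_sub_single_mul {ι R : Type*} [Fintype ι] [LinearOrder ι]
    [LocallyFiniteOrderBot ι] [LocallyFiniteOrderTop ι] [Ring R] (w : ι → ι → R)
    (hw : ∀ i j, w j i = -w i j) (n : ι) :
    ∑ i, ∑ j ∈ Ioi i, ((Pi.single n 1 : ι → R) j - (Pi.single n 1 : ι → R) i) * w i j =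
      ∑ i ∈ univ.erase n, w i n := by
  have into_n : ∑ i, ∑ j ∈ Ioi i, (Pi.single n 1 : ι → R) j * w i j = ∑ i ∈ Iio n, w i n := by
    simp [Pi.single_apply, ← sum_filter, filter_gt_eq_Iio]
  have out_of_n : ∑ i, ∑ j ∈ Ioi i, (Pi.single n 1 : ι → R) i * w i j = ∑ j ∈ Ioi n, w n j := by
    simp [Pi.single_apply]
  simp_rw [sub_mul, sum_sub_distrib]
  rw [into_n, out_of_n, sum_univ_erase_eq_sum_Iio_add_sum_Ioi, sub_eq_add_neg, ← sum_neg_distrib]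
  exact congrArg _ (sum_congr rfl fun j _ => (hw n j).symm)

theorem vandermonde_node_hasDerivAt_general (q : ℕ) (γ : Fin q → ℝ)
    (hγ : Function.Injective γ) (n : Fin q) :
    HasDerivAt
      (fun t : ℝ => ∏ i : Fin q, ∏ j ∈ Finset.Ioi i,
        (Function.update γ n t j - Function.update γ n t i))
      ((∏ i : Fin q, ∏ j ∈ Finset.Ioi i, (γ j - γ i)) *
        ∑ i ∈ Finset.univ.erase n, (γ n - γ i)⁻¹)
      (γ n) := by
  have hupdate := hasDerivAt_pi.1 (hasDerivAt_update γ n (γ n))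
  have factor (i j : Fin q) (hij : j ∈ Ioi i) :
      HasDerivAt (fun t => Function.update γ n t j - Function.update γ n t i)
        ((Function.update γ n (γ n) j - Function.update γ n (γ n) i) *
          (((Pi.single n 1 : Fin q → ℝ) j - (Pi.single n 1 : Fin q → ℝ) i) * (γ j - γ i)⁻¹))
        (γ n) := by
    have hne : γ j - γ i ≠ 0 := sub_ne_zero.2 (hγ.ne (mem_Ioi.1 hij).ne')
    rw [Function.update_eq_self, mul_left_comm, mul_inv_cancel₀ hne, mul_one]
    exact (hupdate j).sub (hupdate i)
  have antisymm (i j : Fin q) : (γ i - γ j)⁻¹ = -(γ j - γ i)⁻¹ := by rw [← neg_sub, inv_neg]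
  refine (HasDerivAt.finsetProd_of_logDeriv fun i _ =>
    HasDerivAt.finsetProd_of_logDeriv fun j hj => factor i j hj).congr_deriv ?_
  rw [Function.update_eq_self, sum_Ioi_single_sub_single_mul _ antisymm]

/-- Derivative of the Vandermonde determinant `∏_{i<j} (γ_j - γ_i)` with respect to the
node `γ_n`: replacing the `n`-th entry of the pairwise-distinct tuple `γ` by a variable `t`,
the resulting function of `t` has derivative
`(∏_{i<j}(γ_j - γ_i)) · ∑_{i ≠ n} (γ_n - γ_i)⁻¹` at `t = γ_n`. -/
theorem vandermonde_node_hasDerivAt (q : ℕ) (hq : 0 < q) (γ : Fin q → ℝ)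
    (hγ : Function.Injective γ) (n : Fin q) :
    HasDerivAt
      (fun t : ℝ => ∏ i : Fin q, ∏ j ∈ Finset.Ioi i,
        (Function.update γ n t j - Function.update γ n t i))
      ((∏ i : Fin q, ∏ j ∈ Finset.Ioi i, (γ j - γ i)) *
        ∑ i ∈ Finset.univ.erase n, (γ n - γ i)⁻¹)
      (γ n) :=
  vandermonde_node_hasDerivAt_general q γ hγ n
end

section
/- Let q ≤ p be positive integers. The determinant of the q×q matrix G with entries G_{m,n} = Γ(p − q + m + n − 1) for m, n ∈ {1, …, q} equals ∏_{i=1}^{q} Γ(i)·Γ(p − q + i); equivalently, det G = (∏_{i=1}^{q} Γ(q − i + 1)·Γ(p − i + 1)), which is the reciprocal of the normalization constant K of Lemma 1 of the paper. -/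
/-!
Write `(a + m + n)! = (a + m)! · (a + m + 1)(a + m + 2)⋯(a + m + n)`: the Hankel matrix of
factorials is a diagonal matrix times the matrix of the rising-factorial polynomials of degree `n`
evaluated at the nodes `a + m + 1`. These polynomials are monic of degree `n`, so the second
determinant is the Vandermonde determinant of the nodes, which only depends on their differences
and is the superfactorial `∏ i!`. Finally `Γ(k + 1) = k!`, and reversing the order of the product
gives the second form.
-/

open Finset Polynomial Matrix Nat

theorem Nat.cast_factorial_add_eq_mul_eval_ascPochhammer (S : Type*) [Semiring S] (a n : ℕ) :
    ((a + n)! : S) = a ! * (ascPochhammer S n).eval ((a + 1 : ℕ) : S) := by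
  rw [ascPochhammer_nat_eq_natCast_ascFactorial, ← Nat.cast_mul, Nat.factorial_mul_ascFactorial]

theorem Matrix.of_factorial_add_add_eq_diagonal_mul (R : Type*) [CommRing R] (a q : ℕ) :
    of (fun m n : Fin q => ((a + m + n)! : R)) =
      diagonal (fun m : Fin q => ((a + m)! : R)) *
        of (fun m n : Fin q => (ascPochhammer R n).eval ((m : R) + (a + 1))) := by
  ext m n
  rw [of_apply, Nat.cast_factorial_add_eq_mul_eval_ascPochhammer R (a + m) n]
  simp [add_comm (m : R), add_right_comm]

theorem Matrix.det_of_eval_ascPochhammer_add (R : Type*) [CommRing R] [IsDomain R] (q : ℕ)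
    (c : R) : (of fun m n : Fin q => (ascPochhammer R n).eval ((m : R) + c)).det =
      ∏ i : Fin q, (i ! : R) := by
  rw [← det_eval_matrixOfPolynomials_eq_det_vandermonde _ _
    (fun n => ascPochhammer_natDegree R n) (fun n => monic_ascPochhammer R n)]
  rcases q with _ | q
  · simp
  · rw [det_vandermonde_add, det_vandermonde_id_eq_superFactorial, ← prod_range_succ_factorial,
      Fin.prod_univ_eq_prod_range (fun i => (i ! : R)), Nat.cast_prod]

theorem Matrix.det_of_factorial_add_add_of_isDomain (R : Type*) [CommRing R] [IsDomain R]
    (a q : ℕ) :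
    (of fun m n : Fin q => ((a + m + n)! : R)).det = ∏ i : Fin q, (i ! : R) * (a + i)! := by
  rw [of_factorial_add_add_eq_diagonal_mul, det_mul, det_diagonal,
    det_of_eval_ascPochhammer_add, ← prod_mul_distrib]
  exact prod_congr rfl fun _ _ => mul_comm _ _

-- `monic_ascPochhammer` needs a domain, so the general case is transported from `ℤ`.
theorem Matrix.det_of_factorial_add_add (R : Type*) [CommRing R] (a q : ℕ) :
    (of fun m n : Fin q => ((a + m + n)! : R)).det = ∏ i : Fin q, (i ! : R) * (a + i)! := by
  have h := congrArg (Int.castRingHom R) (det_of_factorial_add_add_of_isDomain ℤ a q)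
  rw [RingHom.map_det] at h
  convert h using 2
  · ext; simp
  · simp

theorem Real.Gamma_natCast_add_one_eq_factorial (k : ℕ) :
    Real.Gamma ((k + 1 : ℕ) : ℝ) = k ! := by
  exact_mod_cast Real.Gamma_nat_eq_factorial k

theorem det_gamma_hankel_general (q p : ℕ) (hpq : q ≤ p) :
    Matrix.det (Matrix.of fun m n : Fin q =>
        Real.Gamma ((p - q + (m : ℕ) + (n : ℕ) + 1 : ℕ) : ℝ))
      = ∏ i : Fin q, Real.Gamma (((i : ℕ) + 1 : ℕ) : ℝ) *
          Real.Gamma ((p - q + (i : ℕ) + 1 : ℕ) : ℝ) ∧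
    Matrix.det (Matrix.of fun m n : Fin q =>
        Real.Gamma ((p - q + (m : ℕ) + (n : ℕ) + 1 : ℕ) : ℝ))
      = ∏ i : Fin q, Real.Gamma ((q - (i : ℕ) : ℕ) : ℝ) *
          Real.Gamma ((p - (i : ℕ) : ℕ) : ℝ) := by
  simp_rw [Real.Gamma_natCast_add_one_eq_factorial, det_of_factorial_add_add]
  refine ⟨trivial, ?_⟩
  rw [eq_comm, ← Equiv.prod_comp Fin.revPerm]
  refine prod_congr rfl fun i _ => ?_
  have hi := i.isLt
  rw [Fin.revPerm_apply, Fin.val_rev, show q - (q - (i + 1)) = i + 1 by omega,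
    show p - (q - (i + 1)) = p - q + i + 1 by omega, Real.Gamma_natCast_add_one_eq_factorial,
    Real.Gamma_natCast_add_one_eq_factorial]

/-- The determinant of the `q × q` matrix with entries `Γ(p - q + m + n - 1)`
(for `1 ≤ m, n ≤ q`, written here with `0`-based indices `m, n : Fin q` as
`Γ(p - q + m + n + 1)`) equals `∏_{i=1}^{q} Γ(i) Γ(p - q + i)`, and equivalently
`∏_{i=1}^{q} Γ(q - i + 1) Γ(p - i + 1)`, the reciprocal of the normalization
constant `K` of Lemma 1. -/
theorem det_gamma_hankel (q p : ℕ) (hq : 0 < q) (hpq : q ≤ p) :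
    Matrix.det (Matrix.of fun m n : Fin q =>
        Real.Gamma ((p - q + (m : ℕ) + (n : ℕ) + 1 : ℕ) : ℝ))
      = ∏ i : Fin q, Real.Gamma (((i : ℕ) + 1 : ℕ) : ℝ) *
          Real.Gamma ((p - q + (i : ℕ) + 1 : ℕ) : ℝ) ∧
    Matrix.det (Matrix.of fun m n : Fin q =>
        Real.Gamma ((p - q + (m : ℕ) + (n : ℕ) + 1 : ℕ) : ℝ))
      = ∏ i : Fin q, Real.Gamma ((q - (i : ℕ) : ℕ) : ℝ) *
          Real.Gamma ((p - (i : ℕ) : ℕ) : ℝ) :=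
  det_gamma_hankel_general q p hpq
end
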